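/- arXiv:2506.21235 — 3 statements merged into one kernel-verified Lean document; each statement's English description precedes it below -/
import Mathlib

section
/- For every graph G without isolated vertices, there exists a Grundy double dominating sequence S of G such that the number of vertices v in S with N[v] \ ∪_{u earlier in S} N[u] ≠ ∅ is at least half the length of S. -/
/-!
Among the Grundy double dominating sequences choose one, `S`, with `|S¹|` maximal (one exists
because a longest double neighborhood sequence is doubly dominating). A vertex `x ∉ S¹`
footprints some `u` dominated by exactly one earlier vertex `y`, and then `y ∈ S¹`. If
`|S¹| < |S| / 2`, two vertices `x₁` before `x₂` outside `S¹` share the same `y`. Moving `y` to just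
after `x₁` only shrinks the predecessor sets of the other vertices, so it yields a DDS on the same
vertex set in which `y` still footprints the vertex it footprints for `x₂`, every vertex of `S¹`
stays in `S¹`, and `x₁` joins `S¹`: a contradiction.
-/

open SimpleGraph

variable {V : Type*}

/-- The closed neighborhood of a vertex. -/
def cnbr (G : SimpleGraph V) (v : V) : Set V := insert v (G.neighborSet v)

/-- The number of vertices in the list `l` that dominate `u` (i.e. whose closed
neighborhood contains `u`). -/
noncomputable def domCount (G : SimpleGraph V) (u : V) (l : List V) : ℕ :=
  {w | w ∈ l ∧ u ∈ cnbr G w}.ncard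

/-- A double neighborhood sequence (DNS): a sequence of distinct vertices in which each
vertex dominates some vertex dominated at most once by its predecessors. -/
def IsDNS (G : SimpleGraph V) (l : List V) : Prop :=
  l.Nodup ∧ ∀ i : Fin l.length, ∃ u ∈ cnbr G (l.get i), domCount G u (l.take i) ≤ 1

/-- A double dominating sequence (DDS): a DNS whose underlying set is doubly dominating. -/
def IsDDS (G : SimpleGraph V) (l : List V) : Prop :=
  IsDNS G l ∧ ∀ v, 2 ≤ domCount G v l

/-- The Grundy double domination number: maximum length of a DDS. -/
noncomputable def gddn (G : SimpleGraph V) : ℕ :=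
  sSup {n | ∃ l : List V, IsDDS G l ∧ l.length = n}

/-- The maximum double neighborhood number: maximum length of a DNS. -/
noncomputable def mdnn (G : SimpleGraph V) : ℕ :=
  sSup {n | ∃ l : List V, IsDNS G l ∧ l.length = n}

/-- A legal (Grundy domination) sequence. -/
def IsLegal (G : SimpleGraph V) (l : List V) : Prop :=
  l.Nodup ∧ ∀ i : Fin l.length, ∃ u ∈ cnbr G (l.get i), domCount G u (l.take i) = 0

/-- A dominating sequence: legal sequence whose underlying set dominates. -/
def IsDomSeq (G : SimpleGraph V) (l : List V) : Prop :=
  IsLegal G l ∧ ∀ v, 1 ≤ domCount G v l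

/-- The Grundy domination number: maximum length of a dominating sequence. -/
noncomputable def grundy (G : SimpleGraph V) : ℕ :=
  sSup {n | ∃ l : List V, IsDomSeq G l ∧ l.length = n}

/-- The double domination number: minimum size of a double dominating set. -/
noncomputable def ddomNum (G : SimpleGraph V) : ℕ :=
  sInf {n | ∃ D : Set V, (∀ v, 2 ≤ {w | w ∈ D ∧ v ∈ cnbr G w}.ncard) ∧ D.ncard = n}

namespace List

variable {α : Type*} [DecidableEq α] {l l₁ l₂ : List α} {x y z : α}

def before (l : List α) (x : α) : List α := l.takeWhile (· ≠ x)

@[simp] theorem before_cons_self : (x :: l).before x = [] := by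
  simp [before]

@[simp] theorem before_cons_of_ne (h : y ≠ x) : (y :: l).before x = y :: l.before x := by
  simp [before, h]

theorem before_append_of_notMem (hx : x ∉ l₁) : (l₁ ++ l₂).before x = l₁ ++ l₂.before x :=
  takeWhile_append_of_pos fun a ha => by simpa using ne_of_mem_of_not_mem ha hx

theorem before_append_of_mem (hx : x ∈ l₁) : (l₁ ++ l₂).before x = l₁.before x := by
  induction l₁ with
  | nil => simp at hx
  | cons a l₁ ih =>
    by_cases hax : a = x
    · simp [hax]
    · simp [hax, ih ((mem_cons.1 hx).resolve_left (Ne.symm hax))]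

theorem before_append_cons_of_notMem (hx : x ∉ l₁) : (l₁ ++ x :: l₂).before x = l₁ := by
  simp [before_append_of_notMem hx]

theorem ne_of_mem_before (h : y ∈ l.before x) : y ≠ x := by
  simpa using mem_takeWhile_imp h

theorem notMem_before_self : x ∉ l.before x := fun h => ne_of_mem_before h rfl

theorem before_sublist : l.before x <+ l := takeWhile_sublist _

theorem before_subset : l.before x ⊆ l := before_sublist.subset

theorem before_subset_before (h : y ∈ l.before x) : l.before y ⊆ l.before x := by
  induction l with
  | nil => simp [before] at h
  | cons a l ih =>
    by_cases hay : a = y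
    · simp [hay]
    · have hax : a ≠ x := fun hax => by simp [hax] at h
      simp only [before_cons_of_ne hay, before_cons_of_ne hax] at h ⊢
      exact cons_subset_cons _ (ih ((mem_cons.1 h).resolve_left (Ne.symm hay)))

theorem mem_before_or_mem_before (hx : x ∈ l) (hy : y ∈ l) (hxy : x ≠ y) :
    x ∈ l.before y ∨ y ∈ l.before x := by
  induction l with
  | nil => simp at hx
  | cons a l ih =>
    by_cases hax : a = x
    · subst hax; simp [hxy]
    by_cases hay : a = y
    · subst hay; simp [hxy.symm]
    simp only [before_cons_of_ne hax, before_cons_of_ne hay, mem_cons]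
    exact (ih ((mem_cons.1 hx).resolve_left (Ne.symm hax))
      ((mem_cons.1 hy).resolve_left (Ne.symm hay))).imp Or.inr Or.inr

theorem exists_eq_before_append_cons (hx : x ∈ l) : ∃ r, l = l.before x ++ x :: r := by
  induction l with
  | nil => simp at hx
  | cons a l ih =>
    by_cases hax : a = x
    · exact ⟨l, by simp [hax]⟩
    · obtain ⟨r, hr⟩ := ih ((mem_cons.1 hx).resolve_left (Ne.symm hax))
      exact ⟨r, by rw [before_cons_of_ne hax, cons_append, ← hr]⟩

theorem Nodup.take_eq_before (hl : l.Nodup) (i : Fin l.length) :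
    l.take i = l.before (l.get i) := by
  obtain ⟨x, hx⟩ : ∃ x, l.get i = x := ⟨_, rfl⟩
  have hsplit : l = l.take i ++ x :: l.drop (i + 1) := by
    rw [← hx, get_eq_getElem, ← drop_eq_getElem_cons, take_append_drop]
  have hxl : x ∉ l.take i := fun h => by
    rw [hsplit, nodup_append] at hl
    exact hl.2.2 x h x mem_cons_self rfl
  rw [hx, congrArg (before · x) hsplit, before_append_cons_of_notMem hxl]

theorem Nodup.forall_get_take_iff (hl : l.Nodup) (P : α → List α → Prop) :
    (∀ i : Fin l.length, P (l.get i) (l.take i)) ↔ ∀ x ∈ l, P x (l.before x) := by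
  simp only [hl.take_eq_before]
  refine ⟨fun h x hx => ?_, fun h i => h _ (get_mem ..)⟩
  obtain ⟨i, rfl⟩ := mem_iff_get.1 hx
  exact h i

theorem Nodup.ncard_get_take (hl : l.Nodup) (P : α → List α → Prop) :
    {i : Fin l.length | P (l.get i) (l.take i)}.ncard = {x | x ∈ l ∧ P x (l.before x)}.ncard := by
  simp only [hl.take_eq_before]
  rw [← Set.ncard_image_of_injective _ (nodup_iff_injective_get.1 hl)]
  congr 1
  ext x
  constructor
  · rintro ⟨i, hi, rfl⟩
    exact ⟨get_mem .., hi⟩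
  · rintro ⟨hx, hP⟩
    obtain ⟨i, rfl⟩ := mem_iff_get.1 hx
    exact ⟨i, hP, rfl⟩

theorem Nodup.ncard_setOf_mem (hl : l.Nodup) : {x | x ∈ l}.ncard = l.length := by
  rw [← coe_toFinset, Set.ncard_coe_finset, toFinset_card_of_nodup hl]

theorem before_append_cons_subset (hz : z ≠ y) (l₁ l₂ : List α) :
    (l₁ ++ y :: l₂).before z ⊆ (y :: (l₁ ++ l₂)).before z := by
  rw [before_cons_of_ne hz.symm]
  by_cases h : z ∈ l₁
  · rw [before_append_of_mem h, before_append_of_mem h]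
    exact subset_cons_self _ _
  · rw [before_append_of_notMem h, before_append_of_notMem h, before_cons_of_ne hz.symm]
    intro w
    simp only [mem_append, mem_cons]
    tauto

theorem before_append_subset_append (h : l₁.before z ⊆ l₂.before z) (l : List α) :
    (l ++ l₁).before z ⊆ (l ++ l₂).before z := by
  by_cases hz : z ∈ l
  · simp [before_append_of_mem hz]
  · rw [before_append_of_notMem hz, before_append_of_notMem hz]
    exact append_subset.2 ⟨subset_append_left _ _, List.Subset.trans h (subset_append_right _ _)⟩

/-- The witness moves `y` to just after `x`. -/
theorem exists_perm_before_subset (hl : l.Nodup) (hx : x ∈ l) (hy : y ∈ l.before x) :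
    ∃ T : List α, T.Perm l ∧ (∀ z ≠ y, T.before z ⊆ l.before z) ∧
      T.before y ⊆ x :: l.before x ∧ y ∉ T.before x := by
  obtain ⟨r, hr⟩ := exists_eq_before_append_cons hx
  obtain ⟨A, B, hAB⟩ := append_of_mem hy
  have hxAB : x ∉ A ++ B := by
    have := notMem_before_self (l := l) (x := x)
    simp only [hAB, mem_append, mem_cons, not_or] at this ⊢
    tauto
  have hyAB : y ∉ A ++ B := by
    have hnd : (A ++ y :: B).Nodup := hAB ▸ hl.sublist before_sublist
    exact (nodup_cons.1 (nodup_middle.1 hnd)).1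
  have hl' : l = A ++ y :: (B ++ [x] ++ r) := by rw [hr, hAB]; simp
  refine ⟨A ++ (B ++ [x] ++ y :: r), ?_, fun z hz => ?_, ?_, ?_⟩
  · rw [hl']
    exact perm_middle.append_left A
  · rw [hl']
    exact before_append_subset_append (before_append_cons_subset hz _ _) A
  · rw [← append_assoc,
      before_append_cons_of_notMem (by simpa [ne_of_mem_before hy] using hyAB), hAB]
    intro w
    simp only [mem_append, mem_cons]
    tauto
  · rw [show A ++ (B ++ [x] ++ y :: r) = A ++ B ++ x :: y :: r by simp,
      before_append_cons_of_notMem hxAB]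
    exact hyAB

end List

open List

section DoubleDomination

variable {G : SimpleGraph V} {L L' l : List V} {u x y : V}

theorem mem_cnbr_iff : u ∈ cnbr G x ↔ u = x ∨ G.Adj x u := Iff.rfl

theorem mem_cnbr_comm : u ∈ cnbr G x ↔ x ∈ cnbr G u := by
  simp only [mem_cnbr_iff, eq_comm, G.adj_comm]

theorem domCount_mono (h : L' ⊆ L) : domCount G u L' ≤ domCount G u L :=
  Set.ncard_le_ncard (fun _ hw => ⟨h hw.1, hw.2⟩) (L.finite_toSet.subset fun _ hw => hw.1)

theorem List.Perm.domCount_eq (h : L.Perm L') : domCount G u L = domCount G u L' :=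
  (domCount_mono h.subset).antisymm (domCount_mono h.symm.subset)

theorem domCount_eq_zero_iff : domCount G u L = 0 ↔ ∀ w ∈ L, u ∉ cnbr G w := by
  rw [domCount, Set.ncard_eq_zero (L.finite_toSet.subset fun _ hw => hw.1)]
  simp [Set.eq_empty_iff_forall_notMem]

theorem domCount_le_one_iff :
    domCount G u L ≤ 1 ↔ ∀ w₁ ∈ L, ∀ w₂ ∈ L, u ∈ cnbr G w₁ → u ∈ cnbr G w₂ → w₁ = w₂ := by
  rw [domCount, Set.ncard_le_one (L.finite_toSet.subset fun _ hw => hw.1)]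
  simp only [Set.mem_ofPred_eq, and_imp]
  tauto

def DNSStep (G : SimpleGraph V) (L : List V) (x : V) : Prop :=
  ∃ u ∈ cnbr G x, domCount G u L ≤ 1

def LegalStep (G : SimpleGraph V) (L : List V) (x : V) : Prop :=
  ∃ u ∈ cnbr G x, domCount G u L = 0

theorem LegalStep.dnsStep (h : LegalStep G L x) : DNSStep G L x :=
  let ⟨u, hu, hc⟩ := h
  ⟨u, hu, hc.trans_le zero_le_one⟩

theorem DNSStep.anti (h : DNSStep G L x) (hL : L' ⊆ L) : DNSStep G L' x :=
  let ⟨u, hu, hc⟩ := h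
  ⟨u, hu, (domCount_mono hL).trans hc⟩

theorem LegalStep.anti (h : LegalStep G L x) (hL : L' ⊆ L) : LegalStep G L' x :=
  let ⟨u, hu, hc⟩ := h
  ⟨u, hu, Nat.eq_zero_of_le_zero (hc ▸ domCount_mono hL)⟩

def IsSoleDominator (G : SimpleGraph V) (L : List V) (u y : V) : Prop :=
  y ∈ L ∧ u ∈ cnbr G y ∧ ∀ w ∈ L, u ∈ cnbr G w → w = y

theorem DNSStep.exists_isSoleDominator (h : DNSStep G L x) (hx : ¬LegalStep G L x) :
    ∃ u ∈ cnbr G x, ∃ y, IsSoleDominator G L u y := by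
  obtain ⟨u, hu, hc⟩ := h
  have hne : domCount G u L ≠ 0 := fun h0 => hx ⟨u, hu, h0⟩
  obtain ⟨y, hy, huy⟩ : ∃ y ∈ L, u ∈ cnbr G y := by
    simpa [domCount_eq_zero_iff] using hne
  exact ⟨u, hu, y, hy, huy, fun w hw huw => domCount_le_one_iff.1 hc w hw y hy huw huy⟩

theorem IsSoleDominator.domCount_eq_zero (h : IsSoleDominator G L u y) (hL : L' ⊆ L)
    (hy : y ∉ L') : domCount G u L' = 0 :=
  domCount_eq_zero_iff.2 fun w hw huw => hy (h.2.2 w (hL hw) huw ▸ hw)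

theorem isDNS_nil : IsDNS G [] := ⟨nodup_nil, fun i => i.elim0⟩

variable [DecidableEq V]

theorem isDNS_iff : IsDNS G l ↔ l.Nodup ∧ ∀ x ∈ l, DNSStep G (l.before x) x :=
  and_congr_right fun hl => hl.forall_get_take_iff fun x L => DNSStep G L x

/-- The paper's `S¹`, as a set of vertices. -/
def legalSet (G : SimpleGraph V) (l : List V) : Set V :=
  {x | x ∈ l ∧ LegalStep G (l.before x) x}

theorem IsSoleDominator.legalStep (h : IsSoleDominator G (l.before x) u y) :
    LegalStep G (l.before y) y :=
  ⟨u, h.2.1, h.domCount_eq_zero (before_subset_before h.1) notMem_before_self⟩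

/-- Move `y` to just after `x₁`: `y` still footprints `u₂`, and `u₁` becomes new for `x₁`. -/
theorem IsDNS.exists_perm_legalSet_ssubset_of_isSoleDominator {x₁ x₂ u₁ u₂ : V}
    (hl : IsDNS G l) (hx : x₁ ∈ l.before x₂) (hx₁ : ¬LegalStep G (l.before x₁) x₁)
    (hu₁ : u₁ ∈ cnbr G x₁) (h₁ : IsSoleDominator G (l.before x₁) u₁ y)
    (h₂ : IsSoleDominator G (l.before x₂) u₂ y) :
    ∃ T, T.Perm l ∧ IsDNS G T ∧ legalSet G l ⊂ legalSet G T := by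
  obtain ⟨hnd, hsteps⟩ := isDNS_iff.1 hl
  obtain ⟨T, hperm, hsub, hyT, hyx⟩ := exists_perm_before_subset hnd (before_subset hx) h₁.1
  have hlegal_y : LegalStep G (T.before y) y := by
    refine ⟨u₂, h₂.2.1, h₂.domCount_eq_zero (fun w hw => ?_) notMem_before_self⟩
    rcases mem_cons.1 (hyT hw) with rfl | hw
    exacts [hx, before_subset_before hx hw]
  have hlegal_x₁ : LegalStep G (T.before x₁) x₁ :=
    ⟨u₁, hu₁, h₁.domCount_eq_zero (hsub x₁ (ne_of_mem_before h₁.1).symm) hyx⟩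
  refine ⟨T, hperm, isDNS_iff.2 ⟨hperm.nodup_iff.2 hnd, fun z hz => ?_⟩,
    (Set.ssubset_iff_of_subset fun z hz => ?_).2
      ⟨x₁, ⟨hperm.symm.subset (before_subset hx), hlegal_x₁⟩, fun h => hx₁ h.2⟩⟩
  · by_cases hzy : z = y
    · exact hzy ▸ hlegal_y.dnsStep
    · exact (hsteps z (hperm.subset hz)).anti (hsub z hzy)
  · refine ⟨hperm.symm.subset hz.1, ?_⟩
    by_cases hzy : z = y
    · exact hzy ▸ hlegal_y
    · exact hz.2.anti (hsub z hzy)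

/-- Pigeonhole: the sole dominators of footprints of the vertices outside `S¹` lie in `S¹`, so
if `S¹` is the smaller part two of them coincide. -/
theorem IsDNS.exists_perm_legalSet_ssubset (hl : IsDNS G l)
    (h : 2 * (legalSet G l).ncard < l.length) :
    ∃ T, T.Perm l ∧ IsDNS G T ∧ legalSet G l ⊂ legalSet G T := by
  obtain ⟨hnd, hsteps⟩ := isDNS_iff.1 hl
  set N := {x | x ∈ l ∧ ¬LegalStep G (l.before x) x}
  have hcard : (legalSet G l).ncard + N.ncard = l.length := by
    rw [← hnd.ncard_setOf_mem]
    exact Set.ncard_inter_add_ncard_sdiff_eq_ncard _ {x | LegalStep G (l.before x) x}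
      l.finite_toSet
  have hdom (x) (hx : x ∈ N) : ∃ u ∈ cnbr G x, ∃ y, IsSoleDominator G (l.before x) u y :=
    (hsteps x hx.1).exists_isSoleDominator hx.2
  choose! u hu y hy using hdom
  obtain ⟨x₁, hx₁, x₂, hx₂, hne, hyy⟩ := Set.exists_ne_map_eq_of_ncard_lt_of_maps_to
    (s := N) (t := legalSet G l) (f := y) (by omega)
    (fun x hx => ⟨before_subset (hy x hx).1, (hy x hx).legalStep⟩)
    (l.finite_toSet.subset fun _ hx => hx.1)
  rcases mem_before_or_mem_before hx₁.1 hx₂.1 hne with h | h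
  · exact hl.exists_perm_legalSet_ssubset_of_isSoleDominator h hx₁.2 (hu x₁ hx₁) (hy x₁ hx₁)
      (hyy ▸ hy x₂ hx₂)
  · exact hl.exists_perm_legalSet_ssubset_of_isSoleDominator h hx₂.2 (hu x₂ hx₂) (hy x₂ hx₂)
      (hyy ▸ hy x₁ hx₁)

end DoubleDomination

theorem exists_max_of_forall_le {α : Type*} {P : α → Prop} (f : α → ℕ) (n : ℕ)
    (hP : ∃ a, P a) (hf : ∀ a, P a → f a ≤ n) : ∃ a, P a ∧ ∀ b, P b → f b ≤ f a := by
  have hbdd : BddAbove (f '' {a | P a}) := ⟨n, Set.forall_mem_image.2 hf⟩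
  obtain ⟨a, ha, hfa⟩ := Nat.sSup_mem (Set.Nonempty.image f hP) hbdd
  exact ⟨a, ha, fun b hb => hfa ▸ le_csSup hbdd ⟨b, hb, rfl⟩⟩

section Existence

variable {G : SimpleGraph V} {l : List V}

theorem IsDNS.append_singleton {v w : V} (hl : IsDNS G l) (hw : w ∉ l) (hv : v ∈ cnbr G w)
    (hc : domCount G v l ≤ 1) : IsDNS G (l ++ [w]) := by
  classical
  rw [isDNS_iff] at hl ⊢
  refine ⟨concat_eq_append ▸ hl.1.concat hw, fun z hz => ?_⟩
  rcases mem_append.1 hz with hz | hz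
  · rw [before_append_of_mem hz]
    exact hl.2 z hz
  · rw [mem_singleton.1 hz, before_append_cons_of_notMem hw]
    exact ⟨v, hv, hc⟩

/-- A longest DNS is doubly dominating: a vertex dominated at most once has a closed
neighbour outside the sequence, which could be appended. -/
theorem IsDNS.isDDS_of_forall_length_le (hiso : ∀ v : V, ∃ u, G.Adj v u) (hl : IsDNS G l)
    (hmax : ∀ l', IsDNS G l' → l'.length ≤ l.length) : IsDDS G l := by
  refine ⟨hl, fun v => ?_⟩
  by_contra! hc
  obtain ⟨u, hvu⟩ := hiso v
  obtain ⟨w, hvw, hw⟩ : ∃ w ∈ cnbr G v, w ∉ l := by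
    by_contra! hsub
    exact G.ne_of_adj hvu (domCount_le_one_iff.1 (by omega) v (hsub v (Or.inl rfl)) u
      (hsub u (Or.inr hvu)) (Or.inl rfl) (Or.inr hvu.symm))
  have := hmax _ (hl.append_singleton hw (mem_cnbr_comm.1 hvw) (by omega))
  simp at this

theorem exists_isDDS_length_eq_gddn [Fintype V] (hiso : ∀ v : V, ∃ u, G.Adj v u) :
    ∃ l, IsDDS G l ∧ l.length = gddn G := by
  obtain ⟨l, hl, hmax⟩ := exists_max_of_forall_le (P := IsDNS G) List.length (Fintype.card V)
    ⟨[], isDNS_nil⟩ fun l hl => hl.1.length_le_card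
  have hdds := hl.isDDS_of_forall_length_le hiso hmax
  refine ⟨l, hdds, Eq.symm (IsGreatest.csSup_eq ⟨⟨l, hdds, rfl⟩, ?_⟩)⟩
  rintro _ ⟨l', hl', rfl⟩
  exact hmax l' hl'.1

end Existence

/-- there is a Grundy double dominating sequence in which at least half the
vertices have a private (not previously dominated) neighbor at their turn. -/
theorem stmt4 [Fintype V] (G : SimpleGraph V)
    (hiso : ∀ v : V, ∃ u, G.Adj v u) :
    ∃ l : List V, IsDDS G l ∧ l.length = gddn G ∧
      l.length ≤ 2 * ({i : Fin l.length |
        ∃ u ∈ cnbr G (l.get i), domCount G u (l.take i) = 0} : Set (Fin l.length)).ncard := by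
  classical
  obtain ⟨l, ⟨hl, hlen⟩, hmax⟩ := exists_max_of_forall_le (fun l => (legalSet G l).ncard)
    (gddn G) (exists_isDDS_length_eq_gddn hiso) fun l ⟨hl, hlen⟩ =>
      hlen ▸ hl.1.1.ncard_setOf_mem ▸ Set.ncard_le_ncard (fun _ hx => hx.1) l.finite_toSet
  refine ⟨l, hl, hlen, ?_⟩
  rw [hl.1.1.ncard_get_take fun x L => ∃ u ∈ cnbr G x, domCount G u L = 0]
  by_contra! h
  obtain ⟨T, hperm, hT, hlt⟩ := hl.1.exists_perm_legalSet_ssubset h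
  have hTdds : IsDDS G T := ⟨hT, fun v => hperm.domCount_eq ▸ hl.2 v⟩
  exact (Set.ncard_lt_ncard hlt (T.finite_toSet.subset fun _ hx => hx.1)).not_ge
    (hmax T ⟨hTdds, hperm.length_eq.trans hlen⟩)
end

section
/- Let v and v' be true twin vertices of a graph G (N[v] = N[v']), and let S be a double neighborhood sequence of G containing both v and v'. Then there exists a double neighborhood sequence S' of G with the same underlying vertex set in which v and v' appear consecutively. -/
open SimpleGraph

variable {V : Type*}

/- Moving `v` rightwards to the position just before its twin `v'` can only shrink the set of
predecessors of every other vertex, and the condition at a vertex depends only on that set.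
The moved `v` now has as predecessors a subset of the old predecessors of `v'`, so, as
`N[v] = N[v']`, the witness that served `v'` serves `v` as well. -/

lemma domCount_mono_s12 (G : SimpleGraph V) (u : V) {l₁ l₂ : List V} (h : l₁ ⊆ l₂) :
    domCount G u l₁ ≤ domCount G u l₂ :=
  Set.ncard_le_ncard (fun _ hw => ⟨h hw.1, hw.2⟩) (l₂.finite_toSet.subset fun _ hw => hw.1)

lemma isDNS_iff_forall_split (G : SimpleGraph V) (l : List V) :
    IsDNS G l ↔ l.Nodup ∧ ∀ p x q, l = p ++ x :: q → ∃ u ∈ cnbr G x, domCount G u p ≤ 1 := by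
  refine and_congr_right fun _ => ⟨fun h p x q hl => ?_, fun h i => ?_⟩
  · subst hl
    simpa [List.take_left] using h ⟨p.length, by simp⟩
  · refine h _ _ (l.drop (i + 1)) ?_
    simp

lemma List.Nodup.prefix_eq_of_append_cons {α : Type*} {p q p' q' : List α} {x : α}
    (h : (p ++ x :: q).Nodup) (he : p ++ x :: q = p' ++ x :: q') : p = p' := by
  rw [List.nodup_middle, List.nodup_cons, List.mem_append, not_or] at h
  exact ((List.append_cons_inj_of_notMem h.1.1 h.1.2).mp he).1

lemma List.append_append_cons_perm {α : Type*} (A B D : List α) (a : α) :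
    (A ++ B ++ a :: D).Perm (A ++ a :: B ++ D) := by
  simpa using List.perm_middle.append_left A

lemma IsDNS.of_prefix_subset {G : SimpleGraph V} {l l' : List V} (hl : IsDNS G l)
    (hnd : l'.Nodup)
    (h : ∀ x ∈ l', ∃ p q p₀ y q₀, l' = p ++ x :: q ∧ l = p₀ ++ y :: q₀ ∧
      cnbr G y = cnbr G x ∧ p ⊆ p₀) :
    IsDNS G l' := by
  rw [isDNS_iff_forall_split] at hl ⊢
  refine ⟨hnd, fun p x q hsplit => ?_⟩
  obtain ⟨p₁, q₁, p₀, y, q₀, hsplit₁, hl₀, hcnbr, hsub⟩ := h x (by simp [hsplit])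
  have hp : p = p₁ := (hsplit ▸ hnd).prefix_eq_of_append_cons (hsplit.symm.trans hsplit₁)
  obtain ⟨u, hu, hcount⟩ := hl.2 p₀ y q₀ hl₀
  exact ⟨u, hcnbr ▸ hu, (domCount_mono_s12 G u (hp ▸ hsub)).trans hcount⟩

theorem IsDNS.move_before_twin {G : SimpleGraph V} {v v' : V} (htwin : cnbr G v = cnbr G v')
    {A B C : List V} (h : IsDNS G (A ++ v :: B ++ v' :: C)) :
    IsDNS G (A ++ B ++ v :: v' :: C) := by
  have hperm := List.append_append_cons_perm A B (v' :: C) v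
  refine h.of_prefix_subset (hperm.nodup_iff.mpr h.1) fun x hx => ?_
  simp only [List.mem_append, List.mem_cons] at hx
  rcases hx with (hxA | hxB) | rfl | rfl | hxC
  · obtain ⟨A₁, A₂, rfl⟩ := List.append_of_mem hxA
    exact ⟨A₁, A₂ ++ B ++ v :: v' :: C, A₁, x, A₂ ++ v :: B ++ v' :: C, by simp, by simp, rfl,
      List.Subset.refl _⟩
  · obtain ⟨B₁, B₂, rfl⟩ := List.append_of_mem hxB
    exact ⟨A ++ B₁, B₂ ++ v :: v' :: C, A ++ v :: B₁, x, B₂ ++ v' :: C, by simp, by simp, rfl,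
      ((List.sublist_cons_self v B₁).append_left A).subset⟩
  · exact ⟨A ++ B, v' :: C, A ++ x :: B, v', C, by simp, by simp, htwin.symm,
      ((List.sublist_cons_self x B).append_left A).subset⟩
  · exact ⟨A ++ B ++ [v], C, A ++ v :: B, x, C, by simp, by simp, rfl,
      by simp⟩
  · obtain ⟨C₁, C₂, rfl⟩ := List.append_of_mem hxC
    exact ⟨A ++ B ++ v :: v' :: C₁, C₂, A ++ v :: B ++ v' :: C₁, x, C₂, by simp, by simp, rfl,
      (List.append_append_cons_perm A B (v' :: C₁) v).subset⟩

/-- if a DNS contains a pair of true twins, the sequence can be rearranged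
(keeping the same underlying set) so that the twins appear consecutively. -/
theorem stmt12 (G : SimpleGraph V) (v v' : V) (hne : v ≠ v')
    (htwin : cnbr G v = cnbr G v') (S : List V) (hS : IsDNS G S)
    (hv : v ∈ S) (hv' : v' ∈ S) :
    ∃ S' : List V, IsDNS G S' ∧ (∀ x, x ∈ S' ↔ x ∈ S) ∧
      ∃ l₁ l₂ : List V, S' = l₁ ++ v :: v' :: l₂ ∨ S' = l₁ ++ v' :: v :: l₂ := by
  obtain ⟨p, q, rfl⟩ := List.append_of_mem hv
  rcases List.mem_append.mp hv' with hv'p | hv'q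
  · obtain ⟨A, B, rfl⟩ := List.append_of_mem hv'p
    exact ⟨A ++ B ++ v' :: v :: q, hS.move_before_twin htwin.symm,
      fun _ => (List.append_append_cons_perm A B (v :: q) v').mem_iff, A ++ B, q, Or.inr rfl⟩
  · obtain ⟨B, C, rfl⟩ := List.append_of_mem (List.mem_of_ne_of_mem hne.symm hv'q)
    rw [← List.cons_append, ← List.append_assoc] at hS ⊢
    exact ⟨p ++ B ++ v :: v' :: C, hS.move_before_twin htwin,
      fun _ => (List.append_append_cons_perm p B (v' :: C) v).mem_iff, p ++ B, C, Or.inl rfl⟩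
end

section
/- Let G = (S, C, ∅) be a thick spider graph of weight r ≥ 3 (headless). Then γ_{gr}^{×2}(G) = r + 2, and the sequence (s_1,...,s_r, c_1, c_2) is a Grundy double dominating sequence of G. -/
open SimpleGraph

variable {V : Type*}

/-- The headless thick spider of weight `r`: stable set `S` (left copies), clique `C`
(right copies), with `s i` adjacent to `c j` iff `i ≠ j`. -/
def thickSpider (r : ℕ) : SimpleGraph (Fin r ⊕ Fin r) where
  Adj a b := match a, b with
    | .inl _, .inl _ => False
    | .inl i, .inr j => i ≠ j
    | .inr i, .inl j => i ≠ j
    | .inr i, .inr j => i ≠ j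
  symm := by
    constructor
    rintro (i | i) (j | j) h
    · exact h
    · exact fun e => h e.symm
    · exact fun e => h e.symm
    · exact fun e => h e.symm
  loopless := by
    constructor
    rintro (i | i) h
    · exact h
    · exact h rfl

/-!
Three distinct clique vertices doubly dominate the thick spider, and so do two of them together
with all of `S`. The last vertex of a double neighborhood sequence needs a witness that its
predecessors dominate at most once, so those predecessors contain at most two clique vertices,
and if they contain two, they miss some stable vertex. Either way the sequence has at most
`r + 2` vertices, and `(s_1, …, s_r, c_1, c_2)` attains this.
-/

open Finset Sum

section DoubleNeighborhoodSequence

variable {G : SimpleGraph V}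

lemma mem_cnbr {u w : V} : u ∈ cnbr G w ↔ u = w ∨ G.Adj w u := by
  simp [cnbr, SimpleGraph.mem_neighborSet]

lemma two_le_domCount {u : V} {l : List V} {w₁ w₂ : V} (h₁ : w₁ ∈ l) (h₂ : w₂ ∈ l)
    (hne : w₁ ≠ w₂) (hu₁ : u ∈ cnbr G w₁) (hu₂ : u ∈ cnbr G w₂) : 2 ≤ domCount G u l := by
  have hsub : ({w₁, w₂} : Set V) ⊆ {w | w ∈ l ∧ u ∈ cnbr G w} := by
    rintro x (rfl | rfl)
    exacts [⟨h₁, hu₁⟩, ⟨h₂, hu₂⟩]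
  calc 2 = ({w₁, w₂} : Set V).ncard := (Set.ncard_pair hne).symm
    _ ≤ domCount G u l := Set.ncard_le_ncard hsub (l.finite_toSet.subset fun _ hw => hw.1)

lemma domCount_le_one {u : V} {l : List V} (x : V) (h : ∀ w ∈ l, u ∈ cnbr G w → w = x) :
    domCount G u l ≤ 1 := by
  have hsub : {w | w ∈ l ∧ u ∈ cnbr G w} ⊆ {x} := fun w hw => h w hw.1 hw.2
  simpa [domCount] using Set.ncard_le_ncard hsub

lemma isDNS_iff_s19 {l : List V} :
    IsDNS G l ↔ l.Nodup ∧
      ∀ i (hi : i < l.length), ∃ u ∈ cnbr G l[i], domCount G u (l.take i) ≤ 1 :=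
  and_congr_right fun _ => Fin.forall_iff

lemma isDNS_append_singleton {l : List V} {x : V} :
    IsDNS G (l ++ [x]) ↔ IsDNS G l ∧ x ∉ l ∧ ∃ u ∈ cnbr G x, domCount G u l ≤ 1 := by
  have hprefix : ∀ i (hi : i < l.length),
      (l ++ [x])[i]'(by simp; omega) = l[i] ∧ (l ++ [x]).take i = l.take i :=
    fun i hi => ⟨List.getElem_append_left hi, List.take_append_of_le_length hi.le⟩
  have hlast : (l ++ [x])[l.length]'(by simp) = x ∧ (l ++ [x]).take l.length = l :=
    ⟨List.getElem_concat_length rfl _, List.take_left' rfl⟩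
  simp only [isDNS_iff_s19, List.nodup_append_comm (l₁ := l), List.singleton_append, List.nodup_cons]
  constructor
  · rintro ⟨⟨hx, hnd⟩, hw⟩
    refine ⟨⟨hnd, fun i hi => ?_⟩, hx, ?_⟩
    · simpa only [hprefix i hi] using hw i (by simp; omega)
    · simpa only [hlast] using hw l.length (by simp)
  · rintro ⟨⟨hnd, hw⟩, hx, hlastw⟩
    refine ⟨⟨hx, hnd⟩, fun i hi => ?_⟩
    rcases Nat.lt_or_ge i l.length with hi' | hi'
    · simpa only [hprefix i hi'] using hw i hi'
    · obtain rfl : i = l.length := by simp at hi; omega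
      simpa only [hlast] using hlastw

lemma isDNS_of_forall_not_adj {l : List V} (hl : l.Nodup)
    (hind : ∀ v ∈ l, ∀ w ∈ l, ¬ G.Adj v w) : IsDNS G l := by
  induction l using List.reverseRecOn with
  | nil => simp [IsDNS]
  | append_singleton l x ih =>
    obtain ⟨hx, hnd⟩ := List.nodup_cons.mp (List.nodup_append_comm.mp hl)
    refine isDNS_append_singleton.mpr ⟨ih hnd fun v hv w hw => hind v (by simp [hv]) w
      (by simp [hw]), hx, x, mem_cnbr.mpr (.inl rfl), domCount_le_one x fun w hw hxw => ?_⟩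
    exact (mem_cnbr.mp hxw).resolve_right (hind w (by simp [hw]) x (by simp)) |>.symm

lemma gddn_eq_length_of_isDDS {l : List V} (hl : IsDDS G l)
    (hmax : ∀ l', IsDDS G l' → l'.length ≤ l.length) : gddn G = l.length := by
  have hbdd : BddAbove {n | ∃ l' : List V, IsDDS G l' ∧ l'.length = n} := by
    refine ⟨l.length, ?_⟩
    rintro _ ⟨l', hl', rfl⟩
    exact hmax l' hl'
  refine le_antisymm (csSup_le ⟨_, l, hl, rfl⟩ ?_) (le_csSup hbdd ⟨l, hl, rfl⟩)
  rintro _ ⟨l', hl', rfl⟩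
  exact hmax l' hl'

end DoubleNeighborhoodSequence

namespace thickSpider

variable {r : ℕ} {i j : Fin r} {l : List (Fin r ⊕ Fin r)}

lemma inl_mem_cnbr_inl :
    (inl j : Fin r ⊕ Fin r) ∈ cnbr (thickSpider r) (inl i) ↔ j = i := by
  simp [mem_cnbr, thickSpider]

lemma inl_mem_cnbr_inr :
    (inl j : Fin r ⊕ Fin r) ∈ cnbr (thickSpider r) (inr i) ↔ i ≠ j := by
  simp [mem_cnbr, thickSpider]

lemma inr_mem_cnbr_inr : (inr j : Fin r ⊕ Fin r) ∈ cnbr (thickSpider r) (inr i) := by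
  simp [mem_cnbr, thickSpider, eq_comm, em]

lemma two_le_domCount_inr {a b : Fin r} (hab : a ≠ b) (ha : inr a ∈ l) (hb : inr b ∈ l) :
    2 ≤ domCount (thickSpider r) (inr j) l :=
  two_le_domCount ha hb (by simpa) inr_mem_cnbr_inr inr_mem_cnbr_inr

lemma two_le_domCount_of_forall_inl_mem {a b : Fin r} (hab : a ≠ b) (ha : inr a ∈ l)
    (hb : inr b ∈ l) (hS : ∀ j, inl j ∈ l) (u : Fin r ⊕ Fin r) :
    2 ≤ domCount (thickSpider r) u l := by
  rcases u with j | j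
  · obtain ⟨c, hc, hcj⟩ : ∃ c, inr c ∈ l ∧ c ≠ j := by
      by_cases haj : a = j
      exacts [⟨b, hb, haj ▸ hab.symm⟩, ⟨a, ha, haj⟩]
    exact two_le_domCount (hS j) hc (by simp) (inl_mem_cnbr_inl.mpr rfl)
      (inl_mem_cnbr_inr.mpr hcj)
  · exact two_le_domCount_inr hab ha hb

lemma two_le_domCount_of_two_lt_card_toRight (h : 2 < #l.toFinset.toRight)
    (u : Fin r ⊕ Fin r) : 2 ≤ domCount (thickSpider r) u l := by
  obtain ⟨a, ha, b, hb, c, hc, hab, hac, hbc⟩ := two_lt_card.mp h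
  simp only [mem_toRight, List.mem_toFinset] at ha hb hc
  rcases u with j | j
  · obtain ⟨c, hc, d, hd, hcd, hcj, hdj⟩ :
        ∃ c, inr c ∈ l ∧ ∃ d, inr d ∈ l ∧ c ≠ d ∧ c ≠ j ∧ d ≠ j := by
      by_cases haj : a = j
      · exact ⟨b, hb, c, hc, hbc, haj ▸ hab.symm, haj ▸ hac.symm⟩
      by_cases hbj : b = j
      · exact ⟨a, ha, c, hc, hac, haj, hbj ▸ hbc.symm⟩
      · exact ⟨a, ha, b, hb, hab, haj, hbj⟩
    exact two_le_domCount hc hd (by simpa) (inl_mem_cnbr_inr.mpr hcj) (inl_mem_cnbr_inr.mpr hdj)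
  · exact two_le_domCount_inr hab ha hb

lemma card_toRight_le_one_or_card_toLeft_lt {x : Fin r ⊕ Fin r}
    (hl : IsDNS (thickSpider r) (l ++ [x])) :
    #l.toFinset.toRight ≤ 1 ∨ #l.toFinset.toRight = 2 ∧ #l.toFinset.toLeft < r := by
  obtain ⟨-, -, u, -, hu⟩ := isDNS_append_singleton.mp hl
  have hle : #l.toFinset.toRight ≤ 2 := not_lt.mp fun h => by
    have := two_le_domCount_of_two_lt_card_toRight h u
    omega
  refine (Nat.lt_or_eq_of_le hle).imp Nat.le_of_lt_succ fun h2 => ⟨h2, ?_⟩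
  obtain ⟨a, b, hab, hlr⟩ := card_eq_two.mp h2
  have hmem : ∀ c, c ∈ l.toFinset.toRight → inr c ∈ l := by simp
  obtain ⟨j, hj⟩ : ∃ j, inl j ∉ l := by
    by_contra! hS
    have := two_le_domCount_of_forall_inl_mem hab (hmem a (by simp [hlr]))
      (hmem b (by simp [hlr])) hS u
    omega
  simpa using card_lt_univ_of_notMem (s := l.toFinset.toLeft) (x := j) (by simpa using hj)

lemma length_le_of_isDNS (hl : IsDNS (thickSpider r) l) : l.length ≤ r + 2 := by
  rcases l.eq_nil_or_concat' with rfl | ⟨l, x, rfl⟩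
  · simp
  have hcard : #l.toFinset.toLeft + #l.toFinset.toRight = l.length := by
    rw [card_toLeft_add_card_toRight,
      List.toFinset_card_of_nodup (isDNS_append_singleton.mp hl).1.1]
  have hleft : #l.toFinset.toLeft ≤ r := by simpa using card_le_univ l.toFinset.toLeft
  have := card_toRight_le_one_or_card_toLeft_lt hl
  simp only [List.length_append, List.length_singleton]
  omega

lemma isDDS_map_inl_append {a b : Fin r} (hab : a ≠ b) :
    IsDDS (thickSpider r) ((List.finRange r).map inl ++ [inr a, inr b]) := by
  set S : List (Fin r ⊕ Fin r) := (List.finRange r).map inl with hS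
  have hS_dns : IsDNS (thickSpider r) S :=
    isDNS_of_forall_not_adj ((List.nodup_finRange r).map inl_injective)
      (by simp [hS, thickSpider])
  have hSa_dns : IsDNS (thickSpider r) (S ++ [inr a]) := by
    refine isDNS_append_singleton.mpr ⟨hS_dns, by simp [hS], inl b, inl_mem_cnbr_inr.mpr hab,
      domCount_le_one (inl b) fun w hw hbw => ?_⟩
    obtain ⟨j, -, rfl⟩ := List.mem_map.mp hw
    rw [inl_mem_cnbr_inl.mp hbw]
  have hSab_dns : IsDNS (thickSpider r) (S ++ [inr a] ++ [inr b]) := by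
    refine isDNS_append_singleton.mpr ⟨hSa_dns, by simp [hS, hab.symm], inl a,
      inl_mem_cnbr_inr.mpr hab.symm, domCount_le_one (inl a) fun w hw haw => ?_⟩
    rcases List.mem_append.mp hw with hw | hw
    · obtain ⟨j, -, rfl⟩ := List.mem_map.mp hw
      rw [inl_mem_cnbr_inl.mp haw]
    · obtain rfl := List.mem_singleton.mp hw
      exact absurd rfl (inl_mem_cnbr_inr.mp haw)
  rw [show S ++ [inr a, inr b] = S ++ [inr a] ++ [inr b] by simp]
  exact ⟨hSab_dns, two_le_domCount_of_forall_inl_mem hab (by simp) (by simp) (by simp [hS])⟩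

end thickSpider

/-- for the headless thick spider of weight r ≥ 3, the Grundy double
domination number equals r + 2, attained by the sequence (s₁,…,s_r,c₁,c₂). -/
theorem stmt19 (r : ℕ) (hr : 3 ≤ r) :
    gddn (thickSpider r) = r + 2 ∧
    IsDDS (thickSpider r)
      ((List.finRange r).map Sum.inl ++ [Sum.inr (⟨0, by omega⟩ : Fin r), Sum.inr (⟨1, by omega⟩ : Fin r)]) ∧
    ((List.finRange r).map Sum.inl ++
        [Sum.inr (⟨0, by omega⟩ : Fin r), Sum.inr (⟨1, by omega⟩ : Fin r)]).length = gddn (thickSpider r) := by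
  have hdds := thickSpider.isDDS_map_inl_append (r := r) (a := ⟨0, by omega⟩) (b := ⟨1, by omega⟩)
    (by simp [Fin.ext_iff])
  have hgddn := gddn_eq_length_of_isDDS hdds fun l hl => by
    simpa using thickSpider.length_le_of_isDNS hl.1
  exact ⟨by simpa using hgddn, hdds, hgddn.symm⟩
end
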